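/- arXiv:1604.04686 — 5 statements merged into one kernel-verified Lean document; each statement's English description precedes it below -/
import Mathlib

section
/- Let F be a k-uniform intersecting family on a finite set X with covering number τ(F) = k, and let F̃ ⊆ F be any subfamily. Let j ∈ {1, …, k} and let S be any subset of X with |S| = j - 1. Then there exists a vertex s ∈ X such that the set S' = S ∪ {s} has size j and satisfies d_{F̃}(S') ≥ d_{F̃}(S) / k, where d_{F̃}(T) denotes the number of members of F̃ containing T. -/
/-- A family of finite sets is intersecting if any two members intersect. -/
def IntersectingFamily {α : Type} [DecidableEq α] (F : Finset (Finset α)) : Prop :=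
  ∀ f ∈ F, ∀ g ∈ F, (f ∩ g).Nonempty

/-- The covering number: the least size of a set meeting every member of `F`. -/
noncomputable def coverNum {α : Type} [DecidableEq α] (F : Finset (Finset α)) : ℕ :=
  sInf {n : ℕ | ∃ C : Finset α, C.card = n ∧ ∀ f ∈ F, (f ∩ C).Nonempty}

/-- The degree of a vertex: the number of members of `F` containing it. -/
def degVert {α : Type} [DecidableEq α] (F : Finset (Finset α)) (x : α) : ℕ :=
  (F.filter fun f => x ∈ f).card

/-- The degree of a set: the number of members of `F` containing it. -/
def degSet {α : Type} [DecidableEq α] (F : Finset (Finset α)) (S : Finset α) : ℕ :=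
  (F.filter fun f => S ⊆ f).card

/-- a one-vertex extension keeping at least a `1/k` fraction of the degree. -/
theorem exists_one_vertex_extension {α : Type} [DecidableEq α] (k : ℕ)
    (X : Finset α) (F Ft : Finset (Finset α))
    (hX : ∀ f ∈ F, f ⊆ X) (huni : ∀ f ∈ F, f.card = k)
    (hint : IntersectingFamily F) (hcov : coverNum F = k) (hsub : Ft ⊆ F)
    (j : ℕ) (hj1 : 1 ≤ j) (hjk : j ≤ k)
    (S : Finset α) (hSX : S ⊆ X) (hScard : S.card = j - 1) :
    ∃ s ∈ X, (insert s S).card = j ∧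
      (degSet Ft S : ℝ) / (k : ℝ) ≤ (degSet Ft (insert s S) : ℝ) := by
  have hk1 : 1 ≤ k := le_trans hj1 hjk
  -- S is not a cover of F
  have hnotcov : ¬ ∀ f ∈ F, (f ∩ S).Nonempty := by
    intro h
    have hmem : (j - 1) ∈ {n : ℕ | ∃ C : Finset α, C.card = n ∧ ∀ f ∈ F, (f ∩ C).Nonempty} :=
      ⟨S, hScard, h⟩
    have h2 : coverNum F ≤ j - 1 := Nat.sInf_le hmem
    omega
  push_neg at hnotcov
  obtain ⟨f, hfF, hfS⟩ := hnotcov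
  have hfScap : f ∩ S = ∅ := hfS
  have hfcard : f.card = k := huni f hfF
  have hfne : f.Nonempty := Finset.card_pos.mp (hfcard ▸ hk1)
  -- every member of Ft containing S meets f
  have hsubset : Ft.filter (fun g => S ⊆ g) ⊆
      f.biUnion (fun s => Ft.filter (fun g => insert s S ⊆ g)) := by
    intro g hg
    rw [Finset.mem_filter] at hg
    obtain ⟨hgFt, hSg⟩ := hg
    obtain ⟨s, hs⟩ := hint f hfF g (hsub hgFt)
    rw [Finset.mem_inter] at hs
    exact Finset.mem_biUnion.mpr ⟨s, hs.1,
      Finset.mem_filter.mpr ⟨hgFt, Finset.insert_subset hs.2 hSg⟩⟩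
  have hsum : degSet Ft S ≤ ∑ s ∈ f, degSet Ft (insert s S) :=
    le_trans (Finset.card_le_card hsubset) (Finset.card_biUnion_le)
  -- pigeonhole
  have hpig : ∃ s ∈ f, degSet Ft S ≤ k * degSet Ft (insert s S) := by
    apply Finset.exists_le_of_sum_le hfne
    rw [Finset.sum_const, ← Finset.mul_sum, hfcard, smul_eq_mul]
    exact Nat.mul_le_mul_left k hsum
  obtain ⟨s, hsf, hle⟩ := hpig
  have hsX : s ∈ X := hX f hfF hsf
  have hsS : s ∉ S := by
    intro hsS
    have : s ∈ f ∩ S := Finset.mem_inter.mpr ⟨hsf, hsS⟩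
    simp [hfScap] at this
  refine ⟨s, hsX, ?_, ?_⟩
  · rw [Finset.card_insert_of_notMem hsS, hScard]; omega
  · rw [div_le_iff₀ (by positivity : (0:ℝ) < (k:ℝ))]
    calc (degSet Ft S : ℝ) ≤ (k * degSet Ft (insert s S) : ℕ) := by exact_mod_cast hle
      _ = (degSet Ft (insert s S) : ℝ) * k := by push_cast; ring
end

section
/- Let F be a k-uniform intersecting family on a finite set X with covering number τ(F) = k. If U ⊆ X with |U| = u (where 0 ≤ u ≤ k), then d(U) ≤ k^(k-u), where d(U) is the number of members of F containing U. -/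
/-- `d(U) ≤ k^(k-u)`. -/
theorem degSet_le_pow {α : Type} [DecidableEq α] (k u : ℕ)
    (X : Finset α) (F : Finset (Finset α))
    (hX : ∀ f ∈ F, f ⊆ X) (huni : ∀ f ∈ F, f.card = k)
    (hint : IntersectingFamily F) (hcov : coverNum F = k)
    (U : Finset α) (hUX : U ⊆ X) (hUcard : U.card = u) (huk : u ≤ k) :
    degSet F U ≤ k ^ (k - u) := by
  have key : ∀ n (U : Finset α) (u : ℕ), U ⊆ X → U.card = u → u ≤ k → k - u = n →
      degSet F U ≤ k ^ n := by
    intro n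
    induction n with
    | zero =>
      intro U u hUX hUcard huk hn
      have hu : u = k := le_antisymm huk (Nat.le_of_sub_eq_zero hn)
      rw [pow_zero]
      apply Finset.card_le_one.mpr
      intro a ha b hb
      simp only [Finset.mem_filter] at ha hb
      have hA : a = U := (Finset.eq_of_subset_of_card_le ha.2
        (by rw [hUcard, hu, huni a ha.1])).symm
      have hB : b = U := (Finset.eq_of_subset_of_card_le hb.2
        (by rw [hUcard, hu, huni b hb.1])).symm
      rw [hA, hB]
    | succ n ih =>
      intro U u hUX hUcard huk hn
      have hult : u < k := by omega
      have hnc : ∃ g ∈ F, g ∩ U = ∅ := by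
        by_contra h
        push_neg at h
        have hmem : u ∈ {n : ℕ | ∃ C : Finset α, C.card = n ∧ ∀ f ∈ F, (f ∩ C).Nonempty} :=
          ⟨U, hUcard, fun f hf => h f hf⟩
        have := Nat.sInf_le hmem
        rw [coverNum] at hcov
        omega
      obtain ⟨g, hgF, hgU⟩ := hnc
      have hsub : F.filter (fun f => U ⊆ f) ⊆
          g.biUnion (fun x => F.filter (fun f => insert x U ⊆ f)) := by
        intro f hf
        simp only [Finset.mem_filter] at hf
        obtain ⟨x, hx⟩ := hint f hf.1 g hgF
        rw [Finset.mem_inter] at hx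
        exact Finset.mem_biUnion.mpr ⟨x, hx.2, Finset.mem_filter.mpr
          ⟨hf.1, Finset.insert_subset hx.1 hf.2⟩⟩
      calc degSet F U ≤ (g.biUnion (fun x => F.filter (fun f => insert x U ⊆ f))).card :=
            Finset.card_le_card hsub
        _ ≤ ∑ x ∈ g, (F.filter (fun f => insert x U ⊆ f)).card := Finset.card_biUnion_le
        _ ≤ ∑ _x ∈ g, k ^ n := by
            apply Finset.sum_le_sum
            intro x hxg
            have hxU : x ∉ U := fun hxU =>
              Finset.notMem_empty x (hgU ▸ Finset.mem_inter.mpr ⟨hxg, hxU⟩)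
            have hcard : (insert x U).card = u + 1 := by
              rw [Finset.card_insert_of_notMem hxU, hUcard]
            exact ih (insert x U) (u + 1)
              (Finset.insert_subset (hX g hgF hxg) hUX) hcard (by omega) (by omega)
        _ = k * k ^ n := by rw [Finset.sum_const, smul_eq_mul, huni g hgF]
        _ = k ^ (n + 1) := (pow_succ' k n).symm
  exact key (k - u) U u hUX hUcard huk rfl
end

section
/- Let F be a k-uniform intersecting family on a finite set X with covering number τ(F) = k, let F̃ ⊆ F be a subfamily, and let S₀ ⊆ X with |S₀| = m ≤ k. Then for every j with m ≤ j ≤ k there exists a set S ⊆ X with S ⊇ S₀ and |S| = j such that d_{F̃}(S) ≥ k^(-(j-m)) · d_{F̃}(S₀), where d_{F̃}(T) denotes the number of members of F̃ containing T. -/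
/-- iterated extension keeping at least a `k^{-(j-m)}` fraction of the degree. -/
theorem exists_extension_to_size {α : Type} [DecidableEq α] (k m : ℕ)
    (X : Finset α) (F Ft : Finset (Finset α))
    (hX : ∀ f ∈ F, f ⊆ X) (huni : ∀ f ∈ F, f.card = k)
    (hint : IntersectingFamily F) (hcov : coverNum F = k) (hsub : Ft ⊆ F)
    (S₀ : Finset α) (hS₀X : S₀ ⊆ X) (hS₀card : S₀.card = m) (hmk : m ≤ k) :
    ∀ j : ℕ, m ≤ j → j ≤ k →
      ∃ S : Finset α, S ⊆ X ∧ S₀ ⊆ S ∧ S.card = j ∧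
        (k : ℝ) ^ (-((j : ℤ) - (m : ℤ))) * (degSet Ft S₀ : ℝ) ≤ (degSet Ft S : ℝ) := by
  intro j hmj hjk
  induction j, hmj using Nat.le_induction with
  | base =>
    refine ⟨S₀, hS₀X, subset_rfl, hS₀card, ?_⟩
    simp
  | succ j hmj ih =>
    obtain ⟨S, hSX, hS₀S, hScard, hdeg⟩ := ih (le_trans (Nat.le_succ j) hjk)
    have hnotcov : ¬ ∀ f ∈ F, (f ∩ S).Nonempty := by
      intro h
      have : coverNum F ≤ j := Nat.sInf_le ⟨S, hScard, h⟩
      omega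
    push_neg at hnotcov
    obtain ⟨g, hgF, hg⟩ := hnotcov
    have hgS : ∀ x ∈ g, x ∉ S := by
      intro x hx hxS
      have h2 := Finset.mem_inter.mpr ⟨hx, hxS⟩
      rw [hg] at h2
      simp at h2
    have hgcard : g.card = k := huni g hgF
    have hgne : g.Nonempty := by
      rw [← Finset.card_pos, hgcard]; omega
    obtain ⟨x, hxg, hxmax⟩ := Finset.exists_max_image g (fun x => degSet Ft (insert x S)) hgne
    have hsum : degSet Ft S ≤ ∑ y ∈ g, degSet Ft (insert y S) := by
      unfold degSet
      calc (Ft.filter fun f => S ⊆ f).card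
          ≤ (g.biUnion fun y => Ft.filter fun f => insert y S ⊆ f).card := by
            apply Finset.card_le_card
            intro f hf
            rw [Finset.mem_filter] at hf
            obtain ⟨y, hy⟩ := hint f (hsub hf.1) g hgF
            rw [Finset.mem_inter] at hy
            rw [Finset.mem_biUnion]
            exact ⟨y, hy.2, Finset.mem_filter.mpr ⟨hf.1, Finset.insert_subset hy.1 hf.2⟩⟩
        _ ≤ ∑ y ∈ g, (Ft.filter fun f => insert y S ⊆ f).card := Finset.card_biUnion_le
    have hsum2 : ∑ y ∈ g, degSet Ft (insert y S) ≤ k * degSet Ft (insert x S) := by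
      calc ∑ y ∈ g, degSet Ft (insert y S)
          ≤ ∑ _y ∈ g, degSet Ft (insert x S) :=
            Finset.sum_le_sum (fun y hy => hxmax y hy)
        _ = k * degSet Ft (insert x S) := by rw [Finset.sum_const, hgcard, smul_eq_mul]
    have hk0 : (0:ℝ) < k := by
      have : 0 < k := by omega
      exact_mod_cast this
    have hdS : (degSet Ft S : ℝ) ≤ k * degSet Ft (insert x S) := by
      exact_mod_cast hsum.trans hsum2
    refine ⟨insert x S, Finset.insert_subset (hX g hgF hxg) hSX,
      hS₀S.trans (Finset.subset_insert x S), ?_, ?_⟩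
    · rw [Finset.card_insert_of_notMem (hgS x hxg), hScard]
    · have hexp : (k:ℝ) ^ (-(((j+1:ℕ) : ℤ) - (m : ℤ)))
          = (k:ℝ) ^ (-((j : ℤ) - (m : ℤ))) / k := by
        rw [div_eq_mul_inv, ← zpow_neg_one, ← zpow_add₀ (ne_of_gt hk0)]
        congr 1; push_cast; ring
      rw [hexp, div_mul_eq_mul_div, div_le_iff₀ hk0]
      have := hdeg.trans hdS
      nlinarith [this]
end

section
/- Let F be a k-uniform intersecting family on a finite set X with covering number τ(F) = k, and let S ⊆ X. Define P := {x ∈ X \ S : x ∈ f for every f ∈ F with f ⊇ S}, the set of vertices outside S common to all members of F containing S. Then d(S) ≤ k^(k - |S| - |P|), where d(S) denotes the number of members of F containing S (assuming |S| + |P| ≤ k). -/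
lemma degSet_le_one_of_eq {α : Type} [DecidableEq α] (k : ℕ) (X : Finset α)
    (F : Finset (Finset α)) (huni : ∀ f ∈ F, f.card = k) (S : Finset α)
    (heq : S.card + ((X \ S).filter fun x => ∀ f ∈ F, S ⊆ f → x ∈ f).card = k) :
    degSet F S ≤ 1 := by
  set P := (X \ S).filter fun x => ∀ f ∈ F, S ⊆ f → x ∈ f with hP
  have hdisj : Disjoint S P := by
    refine Finset.disjoint_left.2 fun a haS haP => ?_
    exact (Finset.mem_sdiff.1 (Finset.mem_filter.1 haP).1).2 haS
  have hcard : (S ∪ P).card = k := by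
    rw [Finset.card_union_of_disjoint hdisj, heq]
  have hsub : F.filter (fun f => S ⊆ f) ⊆ {S ∪ P} := by
    intro f hf
    rw [Finset.mem_filter] at hf
    have hSP : S ∪ P ⊆ f := by
      refine Finset.union_subset hf.2 fun x hx => ?_
      exact (Finset.mem_filter.1 hx).2 f hf.1 hf.2
    have : f = S ∪ P := by
      refine (Finset.eq_of_subset_of_card_le hSP ?_).symm
      rw [huni f hf.1, hcard]
    simp [this]
  calc degSet F S ≤ ({S ∪ P} : Finset (Finset α)).card := Finset.card_le_card hsub
    _ = 1 := Finset.card_singleton _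

lemma aux {α : Type} [DecidableEq α] (k : ℕ)
    (X : Finset α) (F : Finset (Finset α))
    (hX : ∀ f ∈ F, f ⊆ X) (huni : ∀ f ∈ F, f.card = k)
    (hint : IntersectingFamily F) (hcov : coverNum F = k) :
    ∀ n : ℕ, ∀ S : Finset α, S ⊆ X →
      S.card + ((X \ S).filter fun x => ∀ f ∈ F, S ⊆ f → x ∈ f).card ≤ k →
      k - S.card - ((X \ S).filter fun x => ∀ f ∈ F, S ⊆ f → x ∈ f).card ≤ n →
      degSet F S ≤ k ^ (k - S.card - ((X \ S).filter fun x => ∀ f ∈ F, S ⊆ f → x ∈ f).card) := by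
  intro n
  induction n with
  | zero =>
    intro S hSX hsize hle
    have h0 : k - S.card - ((X \ S).filter fun x => ∀ f ∈ F, S ⊆ f → x ∈ f).card = 0 := by omega
    have heq : S.card + ((X \ S).filter fun x => ∀ f ∈ F, S ⊆ f → x ∈ f).card = k := by omega
    calc degSet F S ≤ 1 := degSet_le_one_of_eq k X F huni S heq
      _ = k ^ (k - S.card - ((X \ S).filter fun x => ∀ f ∈ F, S ⊆ f → x ∈ f).card) := by
        rw [h0, pow_zero]
  | succ n ih =>
    intro S hSX hsize hle
    set P := (X \ S).filter fun x => ∀ f ∈ F, S ⊆ f → x ∈ f with hP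
    by_cases hm : k - S.card - P.card = 0
    · have heq : S.card + P.card = k := by omega
      calc degSet F S ≤ 1 := degSet_le_one_of_eq k X F huni S heq
        _ = k ^ (k - S.card - P.card) := by rw [hm, pow_zero]
    · have hk1 : 1 ≤ k := by omega
      have hdisj : Disjoint S P := by
        refine Finset.disjoint_left.2 fun a haS haP => ?_
        exact (Finset.mem_sdiff.1 (Finset.mem_filter.1 haP).1).2 haS
      have hcardSP : (S ∪ P).card = S.card + P.card :=
        Finset.card_union_of_disjoint hdisj
      have hnc : ¬ ∀ f ∈ F, (f ∩ (S ∪ P)).Nonempty := by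
        intro h
        have : coverNum F ≤ (S ∪ P).card := Nat.sInf_le ⟨S ∪ P, rfl, h⟩
        rw [hcov, hcardSP] at this
        omega
      push_neg at hnc
      obtain ⟨g, hgF, hg⟩ := hnc
      have hgd : ∀ x ∈ g, x ∉ S ∪ P := fun x hx hmem =>
        (Finset.eq_empty_iff_forall_notMem.1 hg x) (Finset.mem_inter.2 ⟨hx, hmem⟩)
      have hsub : F.filter (fun f => S ⊆ f) ⊆
          g.biUnion fun x => F.filter fun f => insert x S ⊆ f := by
        intro f hf
        have hf' := Finset.mem_filter.1 hf
        obtain ⟨x, hx⟩ := hint f hf'.1 g hgF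
        rw [Finset.mem_inter] at hx
        exact Finset.mem_biUnion.2
          ⟨x, hx.2, Finset.mem_filter.2 ⟨hf'.1, Finset.insert_subset hx.1 hf'.2⟩⟩
      have hstep : ∀ x ∈ g, (F.filter fun f => insert x S ⊆ f).card ≤
          k ^ (k - S.card - P.card - 1) := by
        intro x hxg
        by_cases hne : (F.filter fun f => insert x S ⊆ f).Nonempty
        · obtain ⟨f1, hf1⟩ := hne
          rw [Finset.mem_filter] at hf1
          have hxS : x ∉ S := fun h => hgd x hxg (Finset.mem_union_left _ h)
          have hxP : x ∉ P := fun h => hgd x hxg (Finset.mem_union_right _ h)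
          have hxX : x ∈ X := hX g hgF hxg
          set S' := insert x S with hS'
          set P' := (X \ S').filter (fun y => ∀ f ∈ F, S' ⊆ f → y ∈ f) with hP'
          have hS'X : S' ⊆ X := Finset.insert_subset hxX hSX
          have hPP' : P ⊆ P' := by
            intro y hy
            have hy' := Finset.mem_filter.1 hy
            rw [Finset.mem_sdiff] at hy'
            refine Finset.mem_filter.2 ⟨Finset.mem_sdiff.2 ⟨hy'.1.1, fun hmem => ?_⟩,
              fun f hf hSf => hy'.2 f hf fun a ha => hSf (Finset.mem_insert_of_mem ha)⟩
            rcases Finset.mem_insert.1 hmem with h | h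
            · exact hxP (h ▸ hy)
            · exact hy'.1.2 h
          have hdisj' : Disjoint S' P' := by
            refine Finset.disjoint_left.2 fun a haS haP => ?_
            exact (Finset.mem_sdiff.1 (Finset.mem_filter.1 haP).1).2 haS
          have hsub1 : S' ∪ P' ⊆ f1 :=
            Finset.union_subset hf1.2 fun y hy => (Finset.mem_filter.1 hy).2 f1 hf1.1 hf1.2
          have hcards : S'.card + P'.card ≤ k := by
            rw [← Finset.card_union_of_disjoint hdisj']
            calc (S' ∪ P').card ≤ f1.card := Finset.card_le_card hsub1
              _ = k := huni f1 hf1.1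
          have hScard : S'.card = S.card + 1 := Finset.card_insert_of_notMem hxS
          have hPcard : P.card ≤ P'.card := Finset.card_le_card hPP'
          have hle' : k - S'.card - P'.card ≤ n := by omega
          calc (F.filter fun f => insert x S ⊆ f).card ≤ k ^ (k - S'.card - P'.card) :=
              ih S' hS'X hcards hle'
            _ ≤ k ^ (k - S.card - P.card - 1) := Nat.pow_le_pow_right hk1 (by omega)
        · rw [Finset.not_nonempty_iff_eq_empty] at hne
          simp [hne]
      calc degSet F S ≤ (g.biUnion fun x => F.filter fun f => insert x S ⊆ f).card :=
          Finset.card_le_card hsub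
        _ ≤ ∑ x ∈ g, (F.filter fun f => insert x S ⊆ f).card := Finset.card_biUnion_le
        _ ≤ ∑ _x ∈ g, k ^ (k - S.card - P.card - 1) := Finset.sum_le_sum hstep
        _ = k * k ^ (k - S.card - P.card - 1) := by
            rw [Finset.sum_const, huni g hgF, smul_eq_mul]
        _ = k ^ (k - S.card - P.card) := by
            rw [← pow_succ']
            congr 1
            omega

/-- `d(S) ≤ k^(k - |S| - |P|)` where `P` is the set of vertices outside `S`
common to all members of `F` containing `S`. -/
theorem degSet_le_pow_with_common_part {α : Type} [DecidableEq α] (k : ℕ)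
    (X : Finset α) (F : Finset (Finset α))
    (hX : ∀ f ∈ F, f ⊆ X) (huni : ∀ f ∈ F, f.card = k)
    (hint : IntersectingFamily F) (hcov : coverNum F = k)
    (S : Finset α) (hSX : S ⊆ X)
    (hsize : S.card + ((X \ S).filter fun x => ∀ f ∈ F, S ⊆ f → x ∈ f).card ≤ k) :
    degSet F S ≤
      k ^ (k - S.card - ((X \ S).filter fun x => ∀ f ∈ F, S ⊆ f → x ∈ f).card) := by
  exact aux k X F hX huni hint hcov _ S hSX hsize le_rfl
end

section
/- For every ε > 0 there exists k₀ such that for all integers k ≥ k₀, setting t := ⌊log k⌋ (natural logarithm), one has C(k+t-1, t) · k^(k-t) ≤ ε · k^(k-1), where C(n, m) denotes the binomial coefficient. In particular, C(k+t-1, t)·k^(k-t) = o(k^(k-1)) as k → ∞. -/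
open Real Filter

/-- `C(k+t-1, t)·k^(k-t) = o(k^(k-1))` where `t = ⌊log k⌋`. -/
theorem binomial_bound_is_little_o :
    ∀ ε : ℝ, 0 < ε → ∃ k₀ : ℕ, ∀ k : ℕ, k₀ ≤ k →
      (((k + ⌊Real.log k⌋₊ - 1).choose ⌊Real.log k⌋₊ : ℝ) *
          (k : ℝ) ^ (k - ⌊Real.log k⌋₊)) ≤ ε * (k : ℝ) ^ (k - 1) := by
  intro ε hε
  obtain ⟨t₀, ht₀⟩ := Filter.eventually_atTop.mp
    ((FloorSemiring.tendsto_pow_div_factorial_atTop (2 * Real.exp 1)).eventually_lt_const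
      (show (0:ℝ) < ε / Real.exp 1 by positivity))
  -- now find k₀ so that ⌊log k⌋ ≥ max t₀ 1 for k ≥ k₀
  have hfl : Tendsto (fun k : ℕ => ⌊Real.log k⌋₊) atTop atTop :=
    (tendsto_nat_floor_atTop.comp Real.tendsto_log_atTop).comp tendsto_natCast_atTop_atTop
  obtain ⟨k₀, hk₀⟩ := Filter.eventually_atTop.mp (hfl.eventually_ge_atTop (max t₀ 1))
  refine ⟨max k₀ 1, fun k hk => ?_⟩
  have hk1 : 1 ≤ k := le_trans (le_max_right _ _) hk
  set t := ⌊Real.log k⌋₊ with ht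
  have htm : max t₀ 1 ≤ t := hk₀ k (le_trans (le_max_left _ _) hk)
  have ht1 : 1 ≤ t := le_trans (le_max_right _ _) htm
  have htt0 : t₀ ≤ t := le_trans (le_max_left _ _) htm
  have hkpos : (0:ℝ) < k := by exact_mod_cast hk1
  have hlog : Real.log k < t + 1 := by exact_mod_cast Nat.lt_floor_add_one (Real.log k)
  have hkexp : (k:ℝ) < Real.exp (t + 1) := (Real.log_lt_iff_lt_exp hkpos).mp hlog
  have htk : t < k := by
    have h0 : (0:ℝ) ≤ Real.log k := Real.log_nonneg (by exact_mod_cast hk1)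
    have : Real.log k < k := by
      have := Real.log_le_sub_one_of_pos hkpos
      linarith
    exact_mod_cast (Nat.floor_lt h0).mpr (by exact_mod_cast this)
  -- key bound: choose ≤ ε * k^(t-1)
  have key : (((k + t - 1).choose t : ℝ)) ≤ ε * (k:ℝ) ^ (t - 1) := by
    have h1 : (((k + t - 1).choose t : ℝ)) ≤ ((k + t - 1 : ℕ) : ℝ) ^ t / (t.factorial : ℝ) :=
      Nat.choose_le_pow_div t (k + t - 1)
    have h2 : ((k + t - 1 : ℕ) : ℝ) ≤ 2 * k := by
      have : k + t - 1 ≤ 2 * k := by omega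
      have := (Nat.cast_le (α := ℝ)).mpr this
      simpa using this
    have hfac : (0:ℝ) < (t.factorial : ℝ) := by exact_mod_cast Nat.factorial_pos t
    have h3 : ((k + t - 1 : ℕ) : ℝ) ^ t / (t.factorial : ℝ) ≤ (2 * k) ^ t / (t.factorial : ℝ) := by
      gcongr
    have h4 : ((2:ℝ) * k) ^ t ≤ Real.exp 1 * (2 * Real.exp 1) ^ t * (k:ℝ) ^ (t - 1) := by
      have hkle : (k:ℝ) ≤ Real.exp 1 * Real.exp t := by
        rw [← Real.exp_add]
        refine hkexp.le.trans (le_of_eq ?_)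
        ring_nf
      calc ((2:ℝ) * k) ^ t = 2 ^ t * ((k:ℝ) * (k:ℝ) ^ (t-1)) := by
            rw [mul_pow, ← pow_succ']
            congr 2
            omega
        _ ≤ 2 ^ t * ((Real.exp 1 * Real.exp t) * (k:ℝ) ^ (t-1)) := by
            gcongr
        _ = Real.exp 1 * (2 * Real.exp 1) ^ t * (k:ℝ) ^ (t - 1) := by
            rw [mul_pow, ← Real.exp_nat_mul, mul_one]
            ring
    have h5 : Real.exp 1 * ((2 * Real.exp 1) ^ t / (t.factorial : ℝ)) ≤ Real.exp 1 * (ε / Real.exp 1) := by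
      exact mul_le_mul_of_nonneg_left (ht₀ t htt0).le (Real.exp_pos 1).le
    calc (((k + t - 1).choose t : ℝ)) ≤ (2 * (k:ℝ)) ^ t / (t.factorial : ℝ) := h1.trans h3
      _ ≤ (Real.exp 1 * (2 * Real.exp 1) ^ t * (k:ℝ) ^ (t - 1)) / (t.factorial : ℝ) := by gcongr
      _ = (Real.exp 1 * ((2 * Real.exp 1) ^ t / (t.factorial : ℝ))) * (k:ℝ) ^ (t - 1) := by ring
      _ ≤ (Real.exp 1 * (ε / Real.exp 1)) * (k:ℝ) ^ (t - 1) :=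
            mul_le_mul_of_nonneg_right h5 (by positivity)
      _ = ε * (k:ℝ) ^ (t - 1) := by
            rw [mul_div_cancel₀]
            exact (Real.exp_pos 1).ne'
  -- combine
  have hpowsplit : (k:ℝ) ^ (k - 1) = (k:ℝ) ^ (t - 1) * (k:ℝ) ^ (k - t) := by
    rw [← pow_add]
    congr 1
    omega
  calc (((k + t - 1).choose t : ℝ)) * (k:ℝ) ^ (k - t)
      ≤ (ε * (k:ℝ) ^ (t - 1)) * (k:ℝ) ^ (k - t) :=
        mul_le_mul_of_nonneg_right key (by positivity)
    _ = ε * (k:ℝ) ^ (k - 1) := by rw [hpowsplit]; ring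
end
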